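/- arXiv:2110.13057 — 4 statements merged into one kernel-verified Lean document; each statement's English description precedes it below -/
import Mathlib

section
/- If a linear layer y = Wx + b with differentiable loss L satisfies ∂L/∂b_i ≠ 0 for some index i, then the input x can be exactly recovered as x = (∇_{W^i} L) / (∂L/∂b_i), entrywise division by the scalar ∂L/∂b_i. -/
open Matrix

theorem Matrix.add_smul_single_mulVec {R κ μ : Type*} [CommSemiring R] [Fintype μ]
    [DecidableEq κ] [DecidableEq μ] (W : Matrix κ μ R) (x : μ → R) (s : R) (i : κ) (j : μ) :
    (W + s • single i j 1) *ᵥ x = W *ᵥ x + s • x j • Pi.single i 1 := by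
  rw [add_mulVec, smul_mulVec, single_mulVec, one_mul, ← Pi.single,
    ← Pi.single_smul' i (x j) (1 : R), smul_eq_mul, mul_one]

/-- Both sides are line derivatives of `L` at `W x + b`, in the directions `x j • eᵢ` and `eᵢ`;
the line derivative is homogeneous in the direction, since rescaling it only reparametrises
the line. -/
theorem deriv_linearLayer_weight_eq_smul_deriv_bias {κ μ F : Type*} [Fintype μ]
    [DecidableEq κ] [DecidableEq μ] [NormedAddCommGroup F] [NormedSpace ℝ F]
    (W : Matrix κ μ ℝ) (b : κ → ℝ) (x : μ → ℝ) (L : (κ → ℝ) → F) (i : κ) (j : μ) :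
    deriv (fun s : ℝ => L ((W + s • single i j 1) *ᵥ x + b)) 0
      = x j • deriv (fun s : ℝ => L (W *ᵥ x + (b + s • Pi.single i 1))) 0 := by
  have hweight : (fun s : ℝ => L ((W + s • single i j 1) *ᵥ x + b))
      = fun s : ℝ => L (W *ᵥ x + b + s • x j • Pi.single i 1) := by
    simp only [add_smul_single_mulVec, add_right_comm]
  have hbias : (fun s : ℝ => L (W *ᵥ x + (b + s • Pi.single i 1)))
      = fun s : ℝ => L (W *ᵥ x + b + s • Pi.single i 1) := by
    simp only [add_assoc]
  rw [hweight, hbias]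
  exact lineDeriv_smul

theorem linear_layer_input_recovery_general
    (k m : ℕ) (W : Matrix (Fin k) (Fin m) ℝ) (b : Fin k → ℝ) (x : Fin m → ℝ)
    (L : (Fin k → ℝ) → ℝ)
    (i : Fin k)
    (hb : deriv (fun s : ℝ => L (W.mulVec x + (b + s • (Pi.single i 1 : Fin k → ℝ)))) 0 ≠ 0) :
    ∀ j : Fin m,
      x j = deriv (fun s : ℝ =>
          L ((W + s • Matrix.single i j 1).mulVec x + b)) 0
        / deriv (fun s : ℝ => L (W.mulVec x + (b + s • (Pi.single i 1 : Fin k → ℝ)))) 0 := by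
  intro j
  rw [deriv_linearLayer_weight_eq_smul_deriv_bias, smul_eq_mul, mul_div_cancel_right₀ _ hb]

/-- For a linear layer `y = W x + b` with differentiable loss `L`, if the bias
gradient entry `∂L/∂b i` is nonzero, then the input `x` is exactly recovered by
entrywise division of the `i`-th row of the weight gradient by `∂L/∂b i`. -/
theorem linear_layer_input_recovery
    (k m : ℕ) (W : Matrix (Fin k) (Fin m) ℝ) (b : Fin k → ℝ) (x : Fin m → ℝ)
    (L : (Fin k → ℝ) → ℝ)
    (hL : DifferentiableAt ℝ L (W.mulVec x + b)) (i : Fin k)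
    (hb : deriv (fun s : ℝ => L (W.mulVec x + (b + s • (Pi.single i 1 : Fin k → ℝ)))) 0 ≠ 0) :
    ∀ j : Fin m,
      x j = deriv (fun s : ℝ =>
          L ((W + s • Matrix.single i j 1).mulVec x + b)) 0
        / deriv (fun s : ℝ => L (W.mulVec x + (b + s • (Pi.single i 1 : Fin k → ℝ)))) 0 :=
  linear_layer_input_recovery_general k m W b x L i hb
end

section
/- The number of weak compositions f of n into k parts such that a fixed set of i parts each equal exactly 1, and every other part is 0 or ≥ 2, equals Σ_{j=0}^{⌊(n−i)/2⌋} C(k−i, j)·C(n−i−j−1, j−1), where for j=0 the summand is 1 if n=i and 0 otherwise. -/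
open Finset

/-!
Subtracting the prescribed ones on `S` leaves a weak composition of `n - i` supported off `S`
with no part equal to `1`. Sort these by their support `T`, a `j`-subset of the `k - i` free
positions: subtracting `2` from each part on `T` gives a weak composition of `n - i - 2j` into
`j` parts, and stars and bars counts those as `C(n - i - j - 1, j - 1)`.
-/

section

variable {ι : Type*} [DecidableEq ι]

theorem card_piAntidiag_nat (s : Finset ι) (n : ℕ) :
    #(piAntidiag s n) = (#s + n - 1).choose n := by
  rw [← map_sym_eq_piAntidiag, card_map]
  conv_lhs => rw [← attach_map_val (s := s), sym_map, card_map, attach_eq_univ, sym_univ]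
  rw [card_univ, Sym.card_sym_eq_choose, Fintype.card_coe]

theorem card_filter_piAntidiag_translate (s : Finset ι) (u : ι → ℕ)
    (hu : ∀ i, u i ≠ 0 → i ∈ s) (n : ℕ) (hn : ∑ i ∈ s, u i ≤ n)
    (p : (ι → ℕ) → Prop) [DecidablePred p] :
    #{f ∈ piAntidiag s n | (∀ i ∈ s, u i ≤ f i) ∧ p (f - u)} =
      #{g ∈ piAntidiag s (n - ∑ i ∈ s, u i) | p g} := by
  refine card_nbij' (· - u) (· + u) ?_ ?_ ?_ ?_
  · intro f hf
    simp only [coe_filter, mem_piAntidiag] at hf ⊢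
    obtain ⟨⟨hsum, hsupp⟩, hle, hp⟩ := hf
    refine ⟨⟨?_, fun i hi => hsupp i fun h => hi (by simp [h])⟩, hp⟩
    simp only [Pi.sub_apply]
    rw [sum_tsub_distrib s hle, hsum]
  · intro g hg
    simp only [coe_filter, mem_piAntidiag] at hg ⊢
    obtain ⟨⟨hsum, hsupp⟩, hp⟩ := hg
    refine ⟨⟨?_, fun i hi => ?_⟩, fun i _ => le_add_self, by rwa [add_tsub_cancel_right]⟩
    · simp only [Pi.add_apply]
      rw [sum_add_distrib, hsum]
      omega
    · by_cases h : g i = 0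
      · exact hu i (by simpa [h] using hi)
      · exact hsupp i h
  · intro f hf
    simp only [coe_filter, mem_piAntidiag] at hf
    refine tsub_add_cancel_of_le fun i => ?_
    by_cases hi : i ∈ s
    · exact hf.2.1 i hi
    · simp [not_imp_comm.1 (hu i) hi]
  · intro g _
    exact add_tsub_cancel_right g u

theorem card_filter_forall_le_piAntidiag (s : Finset ι) (c n : ℕ) :
    #{f ∈ piAntidiag s n | ∀ i ∈ s, c ≤ f i} =
      if c * #s ≤ n then (#s + (n - c * #s) - 1).choose (n - c * #s) else 0 := by
  split_ifs with h
  · set u : ι → ℕ := fun i => if i ∈ s then c else 0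
    have hu : ∀ i, u i ≠ 0 → i ∈ s := fun i hi => by_contra fun his => hi (if_neg his)
    have hsum : ∑ i ∈ s, u i = c * #s := by
      rw [sum_ite_mem, inter_self, sum_const, smul_eq_mul, mul_comm]
    calc _ = #{f ∈ piAntidiag s n | (∀ i ∈ s, u i ≤ f i) ∧ True} :=
          congr_arg card (filter_congr fun f _ => by simp +contextual [u])
      _ = _ := by
          rw [card_filter_piAntidiag_translate s u hu n (hsum ▸ h) fun _ => True, filter_true,
            hsum, card_piAntidiag_nat]
  · rw [card_eq_zero, filter_eq_empty_iff]
    intro f hf hle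
    have : ∑ i ∈ s, c ≤ ∑ i ∈ s, f i := sum_le_sum hle
    rw [sum_const, smul_eq_mul, (mem_piAntidiag.1 hf).1, mul_comm] at this
    exact h this

theorem card_filter_ne_one_piAntidiag_eq_sum_powerset (s : Finset ι) (n : ℕ) :
    #{f ∈ piAntidiag s n | ∀ i ∈ s, f i ≠ 1} =
      ∑ t ∈ s.powerset, #{f ∈ piAntidiag t n | ∀ i ∈ t, 2 ≤ f i} := by
  have hmaps : Set.MapsTo (fun f : ι → ℕ => {i ∈ s | f i ≠ 0})
      ↑{f ∈ piAntidiag s n | ∀ i ∈ s, f i ≠ 1} ↑s.powerset :=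
    fun f _ => mem_powerset.2 (filter_subset _ _)
  rw [card_eq_sum_card_fiberwise hmaps]
  refine sum_congr rfl fun t ht => congr_arg card (ext fun f => ?_)
  have hts := mem_powerset.1 ht
  simp only [mem_filter, mem_piAntidiag]
  constructor
  · rintro ⟨⟨⟨hsum, hsupp⟩, hne⟩, rfl⟩
    refine ⟨⟨by rwa [sum_filter_ne_zero], fun i hi => mem_filter.2 ⟨hsupp i hi, hi⟩⟩,
      fun i hi => ?_⟩
    obtain ⟨his, hi0⟩ := mem_filter.1 hi
    have := hne i his
    omega
  · rintro ⟨⟨hsum, hsupp⟩, hle⟩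
    have hzero : ∀ i ∉ t, f i = 0 := fun i hi => not_imp_comm.1 (hsupp i) hi
    refine ⟨⟨⟨?_, fun i hi => hts (hsupp i hi)⟩, fun i _ => ?_⟩, ?_⟩
    · rwa [← sum_subset hts fun i _ hi => hzero i hi]
    · by_cases hi : i ∈ t
      · have := hle i hi
        omega
      · simp [hzero i hi]
    · ext i
      simp only [mem_filter]
      constructor
      · exact fun h => hsupp i h.2
      · intro hi
        have := hle i hi
        exact ⟨hts hi, by omega⟩

theorem card_filter_two_le_piAntidiag (s : Finset ι) {n : ℕ} (hn : 0 < n) :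
    #{f ∈ piAntidiag s n | ∀ i ∈ s, 2 ≤ f i} =
      if #s ∈ Icc 1 (n / 2) then (n - #s - 1).choose (#s - 1) else 0 := by
  rw [card_filter_forall_le_piAntidiag]
  by_cases hs : #s = 0
  · simp [hs, Nat.choose_eq_zero_of_lt (Nat.sub_lt hn one_pos)]
  have hmem : #s ∈ Icc 1 (n / 2) ↔ 2 * #s ≤ n := by
    rw [mem_Icc, Nat.le_div_iff_mul_le two_pos]
    omega
  by_cases h : 2 * #s ≤ n
  · rw [if_pos h, if_pos (hmem.2 h)]
    rw [show #s + (n - 2 * #s) - 1 = n - #s - 1 by omega]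
    exact Nat.choose_symm_of_eq_add (by omega)
  · rw [if_neg h, if_neg (mt hmem.1 h)]

theorem sum_choose_smul_ite_mem_Icc (r m : ℕ) (g : ℕ → ℕ) :
    ∑ j ∈ range (r + 1), r.choose j • (if j ∈ Icc 1 m then g j else 0) =
      ∑ j ∈ Icc 1 m, r.choose j * g j := by
  simp_rw [smul_ite, smul_zero, smul_eq_mul]
  rw [← sum_filter, filter_mem_eq_inter]
  refine sum_subset inter_subset_right fun j hj hj' => ?_
  rw [Nat.choose_eq_zero_of_lt, zero_mul]
  simpa [hj] using hj'

theorem card_filter_eq_one_piAntidiag {s S : Finset ι} (hSs : S ⊆ s) {n : ℕ} (hn : #S ≤ n) :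
    #{f ∈ piAntidiag s n | (∀ i ∈ S, f i = 1) ∧ ∀ i ∈ s \ S, f i = 0 ∨ 2 ≤ f i} =
      #{g ∈ piAntidiag (s \ S) (n - #S) | ∀ i ∈ s \ S, g i ≠ 1} := by
  set u : ι → ℕ := fun i => if i ∈ S then 1 else 0
  have hu : ∀ i, u i ≠ 0 → i ∈ s := fun i hi => hSs (by simpa [u] using hi)
  have hsum : ∑ i ∈ s, u i = #S := by simp [u, inter_eq_right.2 hSs]
  calc _ = #{f ∈ piAntidiag s n | (∀ i ∈ s, u i ≤ f i) ∧
          (∀ i ∈ S, (f - u) i = 0) ∧ ∀ i ∈ s \ S, (f - u) i ≠ 1} := by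
        refine congr_arg card (filter_congr fun f _ => ?_)
        simp only [u, mem_sdiff, Pi.sub_apply]
        grind
    _ = #{g ∈ piAntidiag s (n - #S) | (∀ i ∈ S, g i = 0) ∧ ∀ i ∈ s \ S, g i ≠ 1} := by
        rw [card_filter_piAntidiag_translate s u hu n (hsum ▸ hn)
          fun g => (∀ i ∈ S, g i = 0) ∧ ∀ i ∈ s \ S, g i ≠ 1, hsum]
    _ = _ := by
        refine congr_arg card (ext fun g => ?_)
        simp only [mem_filter, mem_piAntidiag, mem_sdiff]
        have hsplit := sum_sdiff hSs (f := g)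
        constructor
        · rintro ⟨⟨hsum, hsupp⟩, hS0, hne⟩
          rw [sum_eq_zero hS0] at hsplit
          exact ⟨⟨by linarith, fun i hi => ⟨hsupp i hi, fun hiS => hi (hS0 i hiS)⟩⟩,
            hne⟩
        · rintro ⟨⟨hsum, hsupp⟩, hne⟩
          have hS0 : ∀ i ∈ S, g i = 0 := fun i hi => by_contra fun h => (hsupp i h).2 hi
          rw [sum_eq_zero hS0] at hsplit
          exact ⟨⟨by linarith, fun i hi => (hsupp i hi).1⟩, hS0, hne⟩

theorem card_filter_eq_one_piAntidiag_eq_sum {s S : Finset ι} (hSs : S ⊆ s) {n : ℕ}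
    (hn : #S < n) :
    #{f ∈ piAntidiag s n | (∀ i ∈ S, f i = 1) ∧ ∀ i ∈ s \ S, f i = 0 ∨ 2 ≤ f i} =
      ∑ j ∈ Icc 1 ((n - #S) / 2), (#s - #S).choose j * (n - #S - j - 1).choose (j - 1) := by
  rw [card_filter_eq_one_piAntidiag hSs hn.le, card_filter_ne_one_piAntidiag_eq_sum_powerset]
  simp_rw [card_filter_two_le_piAntidiag _ (Nat.sub_pos_of_lt hn)]
  rw [sum_powerset_apply_card
      (fun j => if j ∈ Icc 1 ((n - #S) / 2) then (n - #S - j - 1).choose (j - 1) else 0),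
    card_sdiff_of_subset hSs, sum_choose_smul_ite_mem_Icc]

end

theorem count_compositions_fixed_singletons_general (n k i : ℕ) (hin : i < n)
    (S : Finset (Fin k)) (hS : S.card = i) :
    ((Finset.Nat.antidiagonalTuple k n).filter
        (fun f => (∀ s ∈ S, f s = 1) ∧ ∀ t : Fin k, t ∉ S → f t = 0 ∨ 2 ≤ f t)).card
      = (if n = i then 1 else 0)
        + ∑ j ∈ Finset.Icc 1 ((n - i) / 2),
            (k - i).choose j * (n - i - j - 1).choose (j - 1) := by
  subst hS
  rw [if_neg hin.ne', zero_add, ← piAntidiag_univ_fin_eq_antidiagonalTuple]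
  -- `convert` also reconciles the `Fin`-specific decidability instances of the quantifiers.
  convert card_filter_eq_one_piAntidiag_eq_sum (subset_univ S) hin using 3
  · simp
  · rw [card_univ, Fintype.card_fin]

/-- The number of weak compositions `f` of `n` into `k` parts such that a fixed
set `S` of `i` parts each equal exactly `1`, and every other part is `0` or
`≥ 2`, equals `∑_{j=0}^{⌊(n-i)/2⌋} C(k-i, j)·C(n-i-j-1, j-1)`, where the `j = 0`
summand is `1` if `n = i` and `0` otherwise. -/
theorem count_compositions_fixed_singletons (n k i : ℕ) (hkn : n < k) (hin : i < n)
    (S : Finset (Fin k)) (hS : S.card = i) :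
    ((Finset.Nat.antidiagonalTuple k n).filter
        (fun f => (∀ s ∈ S, f s = 1) ∧ ∀ t : Fin k, t ∉ S → f t = 0 ∨ 2 ≤ f t)).card
      = (if n = i then 1 else 0)
        + ∑ j ∈ Finset.Icc 1 ((n - i) / 2),
            (k - i).choose j * (n - i - j - 1).choose (j - 1) :=
  count_compositions_fixed_singletons_general n k i hin S hS
end

section
/- Under the uniform stars-and-bars model (all weak compositions of n into k parts equally likely with k > n > 2), the expected number of parts equal to exactly 1 equals [Σ_{i=1}^{n} i·C(k,i)·N_i] / C(k+n−1, k−1), where N_i = Σ_{j=0}^{⌊(n−i)/2⌋} C(k−i, j)·C(n−i−j−1, j−1) counts placements of the remaining n−i balls into the remaining k−i bins with no bin having exactly one ball (j=0 term interpreted as 1 if i=n, else 0). -/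
open Finset

section Aux

lemma list_sum_range'_aux (f : ℕ → ℕ) (n : ℕ) :
    ((List.range n).map f).sum = ∑ i ∈ Finset.range n, f i := rfl

lemma sum_choose_aux (n k : ℕ) : ∑ i ∈ Finset.range (n+1), (n - i + k - 1).choose (n - i)
    = (n + (k+1) - 1).choose n := by
  have h := Finset.sum_range_reflect (fun j => (j + k - 1).choose j) (n+1)
  simp only [Nat.add_sub_cancel] at h
  rw [h]
  cases k with
  | zero =>
    rw [Finset.sum_eq_single 0]
    · simp
    · intro b _ hb
      simp [Nat.choose_eq_zero_of_lt, Nat.sub_lt (Nat.pos_of_ne_zero hb)]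
    · simp
  | succ k =>
    have e1 : ∀ j ∈ Finset.range (n+1), (j + (k+1) - 1).choose j = (j + k).choose k := by
      intro j _
      rw [show j + (k+1) - 1 = j + k by omega, Nat.choose_symm_add]
    rw [Finset.sum_congr rfl e1]
    have e2 : ∑ m ∈ Finset.Icc k (n + k), m.choose k
        = ∑ j ∈ Finset.range (n + k + 1 - k), (k + j).choose k := by
      rw [← Finset.Ico_add_one_right_eq_Icc, Finset.sum_Ico_eq_sum_range]
    rw [Nat.sum_Icc_choose, show n + k + 1 - k = n + 1 by omega] at e2
    have e3 : (n + k + 1).choose n = (n + k + 1).choose (k + 1) := by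
      rw [show n + k + 1 = n + (k+1) by omega, Nat.choose_symm_add]
    rw [show n + (k+1+1) - 1 = n + k + 1 by omega, e3, e2]
    apply Finset.sum_congr rfl
    intro j _
    rw [Nat.add_comm]

lemma len_adt : ∀ k n : ℕ, (List.Nat.antidiagonalTuple k n).length = (n + k - 1).choose n := by
  intro k
  induction k with
  | zero =>
    intro n
    cases n with
    | zero => rfl
    | succ n => simp [Nat.choose_eq_zero_of_lt]
  | succ k ih =>
    intro n
    rw [show List.Nat.antidiagonalTuple (k+1) n
        = (List.Nat.antidiagonal n).flatMap
            (fun ni => (List.Nat.antidiagonalTuple k ni.2).map fun x => Fin.cons ni.1 x) from rfl,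
      List.length_flatMap]
    simp only [Function.comp_def, List.length_map]
    rw [List.Nat.antidiagonal, List.map_map]
    simp only [Function.comp_def]
    rw [list_sum_range'_aux]
    simp only [ih]
    exact sum_choose_aux n k

lemma card_adt (k n : ℕ) : (Finset.Nat.antidiagonalTuple k n).card = (n + k - 1).choose n := by
  rw [← len_adt]
  rfl

/-- Number of `r`-tuples summing to `m` all of whose entries satisfy `A`. -/
def cnt (r m : ℕ) (A : ℕ → Prop) [DecidablePred A] : ℕ :=
  ((Finset.Nat.antidiagonalTuple r m).filter (fun f => ∀ t, A (f t))).card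

lemma sum_S_eq (r m c : ℕ) (S : Finset (Fin r)) (f : Fin r → ℕ)
    (hsum : ∑ i, f i = m) (hout : ∀ i ∉ S, f i = c) :
    ∑ a ∈ S, f a = m - c * (r - S.card) := by
  have h1 : ∑ a ∈ S, f a + ∑ a ∈ Sᶜ, f a = m := by rw [Finset.sum_add_sum_compl, hsum]
  have h2 : ∑ a ∈ Sᶜ, f a = c * (r - S.card) := by
    rw [Finset.sum_congr rfl (fun a ha => hout a (Finset.mem_compl.mp ha)),
      Finset.sum_const, Finset.card_compl, Fintype.card_fin, smul_eq_mul, mul_comm]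
  omega

lemma card_pin (r m c : ℕ) (A : ℕ → Prop) [DecidablePred A] (S : Finset (Fin r))
    (hm : c * (r - S.card) ≤ m) :
    ((Finset.Nat.antidiagonalTuple r m).filter
      (fun f => (∀ i ∈ S, A (f i)) ∧ ∀ i ∉ S, f i = c)).card
    = cnt S.card (m - c * (r - S.card)) A := by
  classical
  apply Finset.card_bij' (fun f _ => (fun t : Fin S.card => f (S.equivFin.symm t)))
    (fun g _ => (fun i : Fin r => if h : i ∈ S then g (S.equivFin ⟨i, h⟩) else c))
  · intro f hf
    simp only [Finset.mem_filter, Finset.Nat.mem_antidiagonalTuple] at hf ⊢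
    obtain ⟨hsum, hA, hout⟩ := hf
    constructor
    · rw [Equiv.sum_comp S.equivFin.symm (fun a : ↥S => f ↑a), Finset.sum_coe_sort S f]
      exact sum_S_eq r m c S f hsum hout
    · intro t
      exact hA _ (S.equivFin.symm t).2
  · intro g hg
    simp only [Finset.mem_filter, Finset.Nat.mem_antidiagonalTuple] at hg ⊢
    obtain ⟨hsum, hA⟩ := hg
    refine ⟨?_, ?_, ?_⟩
    · rw [← Finset.sum_add_sum_compl S]
      have h1 : (∑ a ∈ S, if h : a ∈ S then g (S.equivFin ⟨a, h⟩) else c)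
          = m - c * (r - S.card) := by
        rw [← Finset.sum_coe_sort S]
        rw [show (∑ a : ↥S, if h : (a : Fin r) ∈ S then g (S.equivFin ⟨a, h⟩) else c)
            = ∑ a : ↥S, g (S.equivFin a) from
          Finset.sum_congr rfl (fun a _ => by rw [dif_pos a.2, Subtype.coe_eta])]
        rw [Equiv.sum_comp S.equivFin g, hsum]
      have h2 : (∑ a ∈ Sᶜ, if h : a ∈ S then g (S.equivFin ⟨a, h⟩) else c)
          = c * (r - S.card) := by
        rw [Finset.sum_congr rfl (fun a ha => dif_neg (Finset.mem_compl.mp ha)),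
          Finset.sum_const, Finset.card_compl, Fintype.card_fin, smul_eq_mul, mul_comm]
      rw [h1, h2]
      omega
    · intro i hi
      simp only [dif_pos hi]
      exact hA _
    · intro i hi
      simp only [dif_neg hi]
  · intro f hf
    funext x
    by_cases h : x ∈ S
    · simp only [dif_pos h, Equiv.symm_apply_apply]
    · simp only [dif_neg h]
      exact ((Finset.mem_filter.mp hf).2.2 x h).symm
  · intro g hg
    funext t
    have h : ((S.equivFin.symm t : ↥S) : Fin r) ∈ S := (S.equivFin.symm t).2
    simp only [dif_pos h, Subtype.coe_eta, Equiv.apply_symm_apply]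

lemma cnt_ge2_zero (r m : ℕ) (h : m < 2 * r) : cnt r m (fun x => 2 ≤ x) = 0 := by
  rw [cnt, Finset.card_eq_zero, Finset.eq_empty_iff_forall_notMem]
  intro f hf
  rw [Finset.mem_filter, Finset.Nat.mem_antidiagonalTuple] at hf
  have : 2 * r ≤ ∑ i, f i := by
    calc 2 * r = ∑ _i : Fin r, 2 := by simp [Finset.sum_const, mul_comm]
    _ ≤ ∑ i, f i := Finset.sum_le_sum (fun i _ => hf.2 i)
  omega

lemma cnt_ge2 (r m : ℕ) (h : 2 * r ≤ m) :
    cnt r m (fun x => 2 ≤ x) = (m - 2 * r + r - 1).choose (m - 2 * r) := by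
  rw [← card_adt, cnt]
  apply Finset.card_bij' (fun f _ => (fun i => f i - 2)) (fun g _ => (fun i => g i + 2))
  · intro f hf
    funext i
    exact Nat.sub_add_cancel ((Finset.mem_filter.mp hf).2 i)
  · intro g _
    funext i
    show g i + 2 - 2 = g i
    omega
  · intro f hf
    rw [Finset.mem_filter, Finset.Nat.mem_antidiagonalTuple] at hf
    rw [Finset.Nat.mem_antidiagonalTuple]
    have e : ∀ i, f i - 2 + 2 = f i := fun i => Nat.sub_add_cancel (hf.2 i)
    have : (∑ i, (f i - 2)) + 2 * r = m := by
      calc (∑ i, (f i - 2)) + 2 * r = ∑ i, (f i - 2 + 2) := by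
            simp [Finset.sum_add_distrib, Finset.sum_const, mul_comm]
        _ = m := by simp_rw [e]; exact hf.1
    omega
  · intro g hg
    rw [Finset.Nat.mem_antidiagonalTuple] at hg
    rw [Finset.mem_filter, Finset.Nat.mem_antidiagonalTuple]
    refine ⟨?_, fun i => by show 2 ≤ g i + 2; omega⟩
    rw [Finset.sum_add_distrib, hg]
    simp [Finset.sum_const, mul_comm]
    omega

lemma cnt_zero (m : ℕ) (A : ℕ → Prop) [DecidablePred A] :
    cnt 0 m A = if m = 0 then 1 else 0 := by
  cases m with
  | zero => rw [cnt]; simp [Finset.Nat.antidiagonalTuple_zero_zero]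
  | succ m => rw [cnt]; simp [Finset.Nat.antidiagonalTuple_zero_succ]

lemma cnt_ne_one_eq (r m : ℕ) :
    cnt r m (fun x => x ≠ 1) = ∑ j ∈ Finset.range (r+1), r.choose j * cnt j m (fun x => 2 ≤ x) := by
  classical
  rw [cnt, Finset.card_eq_sum_card_fiberwise
    (f := fun f => (univ : Finset (Fin r)).filter (fun i => f i ≠ 0))
    (t := (univ : Finset (Fin r)).powerset)
    (fun f _ => Finset.mem_powerset.mpr (Finset.subset_univ _))]
  have step2 : ∀ S ∈ (univ : Finset (Fin r)).powerset,
      (((Finset.Nat.antidiagonalTuple r m).filter (fun f => ∀ t, f t ≠ 1)).filter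
        (fun f => univ.filter (fun i => f i ≠ 0) = S)).card
      = cnt S.card m (fun x => 2 ≤ x) := by
    intro S _
    rw [Finset.filter_filter]
    have e : ((Finset.Nat.antidiagonalTuple r m).filter
        (fun f => (∀ t, f t ≠ 1) ∧ univ.filter (fun i => f i ≠ 0) = S))
        = (Finset.Nat.antidiagonalTuple r m).filter
            (fun f => (∀ i ∈ S, 2 ≤ f i) ∧ ∀ i ∉ S, f i = 0) := by
      apply Finset.filter_congr
      intro f _
      simp only [Finset.ext_iff, Finset.mem_filter, Finset.mem_univ, true_and]
      constructor
      · rintro ⟨h1, h2⟩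
        constructor
        · intro i hi
          have := (h2 i).mpr hi
          have := h1 i
          omega
        · intro i hi
          by_contra hne
          exact hi ((h2 i).mp hne)
      · rintro ⟨h1, h2⟩
        constructor
        · intro t
          by_cases ht : t ∈ S
          · have := h1 t ht; omega
          · have := h2 t ht; omega
        · intro i
          constructor
          · intro hne
            by_contra hi
            exact hne (h2 i hi)
          · intro hi
            have := h1 i hi; omega
    rw [e]
    have := card_pin r m 0 (fun x => 2 ≤ x) S (by simp)
    simpa using this
  rw [Finset.sum_congr rfl step2]
  have := Finset.sum_powerset_apply_card (fun j => cnt j m (fun x => 2 ≤ x))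
    (x := (univ : Finset (Fin r)))
  rw [this, Finset.card_univ, Fintype.card_fin]
  simp [smul_eq_mul]

lemma cnt_ne_one_val (r m : ℕ) (hmr : m ≤ r) :
    cnt r m (fun x => x ≠ 1)
      = (if m = 0 then 1 else 0)
        + ∑ j ∈ Finset.Icc 1 (m / 2), r.choose j * (m - j - 1).choose (j - 1) := by
  rw [cnt_ne_one_eq]
  have hins : Finset.range (r+1) = insert 0 (Finset.Icc 1 r) := by
    ext x; simp [Finset.mem_range, Finset.mem_Icc, Finset.mem_insert]; omega
  rw [hins, Finset.sum_insert (by simp)]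
  congr 1
  · rw [cnt_zero]; simp
  · rw [← Finset.sum_subset (Finset.Icc_subset_Icc_right (le_trans (Nat.div_le_self m 2) hmr))]
    · apply Finset.sum_congr rfl
      intro j hj
      rw [Finset.mem_Icc] at hj
      have h2j : 2 * j ≤ m := by
        have := (Nat.le_div_iff_mul_le (by norm_num)).mp hj.2
        omega
      rw [cnt_ge2 j m h2j]
      have e1 : m - 2 * j + j - 1 = m - j - 1 := by omega
      rw [e1]
      have hle : m - 2 * j ≤ m - j - 1 := by omega
      have e2 : m - j - 1 - (m - 2 * j) = j - 1 := by omega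
      rw [← e2, Nat.choose_symm hle]
    · intro j hj hnj
      rw [Finset.mem_Icc] at hj
      rw [Finset.mem_Icc] at hnj
      have : m < 2 * j := by omega
      rw [cnt_ge2_zero j m this, Nat.mul_zero]

lemma ones_count (k n i : ℕ) (hi : i ≤ n) :
    ((Finset.Nat.antidiagonalTuple k n).filter
      (fun f => ((univ : Finset (Fin k)).filter (fun t => f t = 1)).card = i)).card
    = k.choose i * cnt (k - i) (n - i) (fun x => x ≠ 1) := by
  classical
  have main := Finset.card_eq_sum_card_fiberwise
    (s := (Finset.Nat.antidiagonalTuple k n).filter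
      (fun f => ((univ : Finset (Fin k)).filter (fun t => f t = 1)).card = i))
    (f := fun f => (univ : Finset (Fin k)).filter (fun t => f t = 1))
    (t := (univ : Finset (Fin k)).powersetCard i)
    (fun f hf => Finset.mem_powersetCard.mpr
      ⟨Finset.subset_univ _, (Finset.mem_filter.mp hf).2⟩)
  rw [main]
  have step : ∀ S ∈ (univ : Finset (Fin k)).powersetCard i,
      (((Finset.Nat.antidiagonalTuple k n).filter
        (fun f => ((univ : Finset (Fin k)).filter (fun t => f t = 1)).card = i)).filter
        (fun f => (univ : Finset (Fin k)).filter (fun t => f t = 1) = S)).card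
      = cnt (k - i) (n - i) (fun x => x ≠ 1) := by
    clear main
    intro S hS
    obtain ⟨-, hScard⟩ := Finset.mem_powersetCard.mp hS
    have hik : i ≤ k := by rw [← hScard]; simpa using Finset.card_le_univ S
    have harith : n - 1 * (k - (k - i)) = n - i := by omega
    rw [Finset.filter_filter]
    have e : ((Finset.Nat.antidiagonalTuple k n).filter
        (fun f => ((univ : Finset (Fin k)).filter (fun t => f t = 1)).card = i ∧
          (univ : Finset (Fin k)).filter (fun t => f t = 1) = S))
        = (Finset.Nat.antidiagonalTuple k n).filter
            (fun f => (∀ t ∈ Sᶜ, f t ≠ 1) ∧ ∀ t ∉ Sᶜ, f t = 1) := by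
      apply Finset.filter_congr
      intro f _
      constructor
      · rintro ⟨-, h2⟩
        constructor
        · intro t ht
          rw [Finset.mem_compl] at ht
          intro h1
          exact ht (h2 ▸ Finset.mem_filter.mpr ⟨Finset.mem_univ t, h1⟩)
        · intro t ht
          rw [Finset.mem_compl, not_not] at ht
          have htm : t ∈ (univ : Finset (Fin k)).filter (fun t => f t = 1) := by
            rw [h2]; exact ht
          exact (Finset.mem_filter.mp htm).2
      · rintro ⟨h1, h2⟩
        have hset : (univ : Finset (Fin k)).filter (fun t => f t = 1) = S := by
          ext t
          simp only [Finset.mem_filter, Finset.mem_univ, true_and]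
          constructor
          · intro h
            by_contra ht
            exact h1 t (Finset.mem_compl.mpr ht) h
          · intro ht
            exact h2 t (by simp [Finset.mem_compl, ht])
        exact ⟨hset ▸ hScard, hset⟩
    rw [e]
    have hm : 1 * (k - Sᶜ.card) ≤ n := by
      have := Finset.card_compl (α := Fin k) S
      rw [Fintype.card_fin] at this
      omega
    rw [card_pin k n 1 (fun x => x ≠ 1) Sᶜ hm]
    rw [Finset.card_compl]
    rw [Fintype.card_fin]
    rw [hScard]
    rw [harith]
  rw [Finset.sum_congr rfl step, Finset.sum_const, Finset.card_powersetCard,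
    Finset.card_univ, Fintype.card_fin, smul_eq_mul]

lemma num_eq (n k : ℕ) (hn : 2 < n) (hk : n < k) :
    (∑ f ∈ Finset.Nat.antidiagonalTuple k n,
      ((univ : Finset (Fin k)).filter (fun t => f t = 1)).card)
      = ∑ i ∈ Finset.Icc 1 n, i * (k.choose i *
          ((if i = n then 1 else 0)
            + ∑ j ∈ Finset.Icc 1 ((n - i) / 2),
                (k - i).choose j * (n - i - j - 1).choose (j - 1))) := by
  classical
  have hmap : ∀ f ∈ Finset.Nat.antidiagonalTuple k n,
      ((univ : Finset (Fin k)).filter (fun t => f t = 1)).card ∈ Finset.range (n+1) := by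
    intro f hf
    rw [Finset.mem_range, Nat.lt_succ_iff]
    rw [Finset.Nat.mem_antidiagonalTuple] at hf
    calc ((univ : Finset (Fin k)).filter (fun t => f t = 1)).card
        = ∑ t ∈ (univ : Finset (Fin k)).filter (fun t => f t = 1), f t := by
          rw [Finset.card_eq_sum_ones]
          exact Finset.sum_congr rfl (fun t ht => ((Finset.mem_filter.mp ht).2).symm)
      _ ≤ ∑ t, f t := Finset.sum_le_sum_of_subset (Finset.filter_subset _ _)
      _ = n := hf
  rw [← Finset.sum_fiberwise_of_maps_to hmap
    (fun f => ((univ : Finset (Fin k)).filter (fun t => f t = 1)).card)]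
  rw [← Finset.sum_subset
    (show Finset.Icc 1 n ⊆ Finset.range (n+1) by
      intro x hx; rw [Finset.mem_Icc] at hx; rw [Finset.mem_range]; omega)
    (by
      intro x hx hnx
      rw [Finset.mem_range] at hx
      rw [Finset.mem_Icc] at hnx
      apply Finset.sum_eq_zero
      intro f hf
      have := (Finset.mem_filter.mp hf).2
      omega)]
  apply Finset.sum_congr rfl
  intro c hc
  rw [Finset.mem_Icc] at hc
  rw [Finset.sum_congr rfl (fun f hf => (Finset.mem_filter.mp hf).2),
    Finset.sum_const, smul_eq_mul, ones_count k n c hc.2,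
    cnt_ne_one_val (k - c) (n - c) (by omega)]
  have hif : (if n - c = 0 then 1 else 0) = (if c = n then (1 : ℕ) else 0) := by
    have : (n - c = 0) ↔ (c = n) := by omega
    simp [this]
  rw [hif]
  ring

end Aux

/-- Main counting identity behind Proposition 1: under the uniform
stars-and-bars model (all weak compositions of `n` into `k` parts equally
likely, `k > n > 2`), the expected number of parts equal to exactly `1` is
`[∑_{i=1}^{n} i·C(k,i)·N_i] / C(k+n-1, k-1)`, where
`N_i = ∑_{j=0}^{⌊(n-i)/2⌋} C(k-i, j)·C(n-i-j-1, j-1)` counts placements of the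
remaining balls with no remaining bin holding exactly one ball (the `j = 0`
term being `1` if `i = n` and `0` otherwise). -/
theorem expected_recovered_stars_and_bars (n k : ℕ) (hn : 2 < n) (hk : n < k) :
    (∑ f ∈ Finset.Nat.antidiagonalTuple k n,
        ((univ.filter (fun i : Fin k => f i = 1)).card : ℝ))
        / ((Finset.Nat.antidiagonalTuple k n).card : ℝ)
      = (∑ i ∈ Finset.Icc 1 n, (i : ℝ) * (k.choose i : ℝ) *
            ((if i = n then 1 else 0)
              + ∑ j ∈ Finset.Icc 1 ((n - i) / 2),
                  ((k - i).choose j : ℝ) * ((n - i - j - 1).choose (j - 1) : ℝ)))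
        / (((k + n - 1).choose (k - 1) : ℕ) : ℝ) := by
  have hden : (Finset.Nat.antidiagonalTuple k n).card = (k + n - 1).choose (k - 1) := by
    rw [card_adt]
    have h1 : (k : ℕ) - 1 ≤ k + n - 1 := by omega
    have := Nat.choose_symm h1
    rw [show k + n - 1 - (k - 1) = n by omega] at this
    rw [← this, show n + k - 1 = k + n - 1 by omega]
  have hnum : (∑ f ∈ Finset.Nat.antidiagonalTuple k n,
      ((univ.filter (fun i : Fin k => f i = 1)).card : ℝ))
      = ((∑ f ∈ Finset.Nat.antidiagonalTuple k n,
          ((univ : Finset (Fin k)).filter (fun t => f t = 1)).card : ℕ) : ℝ) := by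
    push_cast
    rfl
  rw [hnum, num_eq n k hn hk, hden]
  congr 1
  push_cast
  apply Finset.sum_congr rfl
  intro i _
  ring
end

section
/- If x_1, …, x_n ∈ ℝ^m have pairwise distinct values under a linear functional h (h(x_s) ≠ h(x_t) for s ≠ t), and the thresholds c_0 < c_1 < … < c_k separate all values (each interval (c_{l−1}, c_l] contains at most one h(x_t), and all h(x_t) ∈ (c_0, c_k]), then every data point x_t is exactly recoverable from the aggregated quantities G_l = Σ_{t: h(x_t) > c_l} λ_t x_t and D_l = Σ_{t: h(x_t) > c_l} λ_t, provided all λ_t ≠ 0. -/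
open Finset

/-- Full-batch recovery: if the data points `x t` have pairwise distinct values
under the linear functional `h`, the strictly increasing thresholds
`c 0 < … < c k` separate all the values (each interval `(c (l-1), c l]`
contains at most one value and all values lie in `(c 0, c k]`), and all
coefficients `λ t` are nonzero, then every data point is exactly recoverable
from the bin aggregates `G l = ∑_{t : h(x t) > c l} λ t • x t` and
`D l = ∑_{t : h(x t) > c l} λ t`. -/
theorem full_batch_exact_recovery
    (n m k : ℕ) (x : Fin n → Fin m → ℝ) (lam : Fin n → ℝ)
    (hlam : ∀ t, lam t ≠ 0)
    (h : (Fin m → ℝ) →ₗ[ℝ] ℝ)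
    (hdist : ∀ s t : Fin n, s ≠ t → h (x s) ≠ h (x t))
    (c : ℕ → ℝ) (hc : StrictMono c)
    (hsep : ∀ l : ℕ, 1 ≤ l → l ≤ k →
        {t : Fin n | c (l - 1) < h (x t) ∧ h (x t) ≤ c l}.Subsingleton)
    (hrange : ∀ t : Fin n, c 0 < h (x t) ∧ h (x t) ≤ c k)
    (G : ℕ → Fin m → ℝ) (D : ℕ → ℝ)
    (hG : ∀ l : ℕ, G l = ∑ t ∈ univ.filter (fun t : Fin n => c l < h (x t)), lam t • x t)
    (hD : ∀ l : ℕ, D l = ∑ t ∈ univ.filter (fun t : Fin n => c l < h (x t)), lam t) :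
    ∀ t : Fin n, ∃ l : ℕ, 1 ≤ l ∧ l ≤ k ∧ D (l - 1) ≠ D l ∧
      (D (l - 1) - D l)⁻¹ • (G (l - 1) - G l) = x t := by
  classical
  intro t
  obtain ⟨h0, hk⟩ := hrange t
  have hex : ∃ l, h (x t) ≤ c l := ⟨k, hk⟩
  set l := Nat.find hex with hl
  have hle : h (x t) ≤ c l := Nat.find_spec hex
  have hl1 : 1 ≤ l := by
    by_contra hcon
    have : l = 0 := by omega
    rw [this] at hle
    exact absurd hle (not_le.mpr h0)
  have hlk : l ≤ k := Nat.find_le hk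
  have hlt : c (l - 1) < h (x t) :=
    lt_of_not_ge (Nat.find_min hex (Nat.sub_lt hl1 one_pos))
  have hsub : univ.filter (fun s : Fin n => c l < h (x s)) ⊆
      univ.filter (fun s : Fin n => c (l - 1) < h (x s)) := by
    intro s hs
    simp only [mem_filter, mem_univ, true_and] at *
    exact lt_of_le_of_lt (hc.monotone (Nat.sub_le l 1)) hs
  have hsdiff : univ.filter (fun s : Fin n => c (l - 1) < h (x s)) \
      univ.filter (fun s : Fin n => c l < h (x s)) = {t} := by
    ext s
    simp only [mem_sdiff, mem_filter, mem_univ, true_and, mem_singleton, not_lt]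
    constructor
    · rintro ⟨h1, h2⟩
      exact hsep l hl1 hlk ⟨h1, h2⟩ ⟨hlt, hle⟩
    · rintro rfl; exact ⟨hlt, hle⟩
  have hDdiff : D (l - 1) - D l = lam t := by
    rw [hD, hD, ← Finset.sum_sdiff_eq_sub hsub, hsdiff, sum_singleton]
  have hGdiff : G (l - 1) - G l = lam t • x t := by
    rw [hG, hG, ← Finset.sum_sdiff_eq_sub hsub, hsdiff, sum_singleton]
  refine ⟨l, hl1, hlk, ?_, ?_⟩
  · rw [← sub_ne_zero, hDdiff]; exact hlam t
  · rw [hDdiff, hGdiff, inv_smul_smul₀ (hlam t)]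
end
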